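/- For an ordered Π-net, every S-semi-flow v (i.e., v·W = 0) is a unique rational linear combination of the vectors v_i = ∑_{p ∈ P_i} B(p), i = 1, …, n; that is, {v_1, …, v_n} is a basis of the left kernel of the incidence matrix W. -/

import Mathlib

open Finset

/-- A transition `t` is enabled at marking `m`. -/
def enabledAt {P T : Type*} (Wm : P → T → ℕ) (m : P → ℕ) (t : T) : Prop :=
  ∀ p, Wm p t ≤ m p

/-- Firing transition `t` at marking `m`. -/
def fireAt {P T : Type*} (Wm Wp : P → T → ℕ) (m : P → ℕ) (t : T) : P → ℕ :=
  fun p => m p - Wm p t + Wp p t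

/-- One step of the reachability graph. -/
def step {P T : Type*} (Wm Wp : P → T → ℕ) (m m' : P → ℕ) : Prop :=
  ∃ t, enabledAt Wm m t ∧ m' = fireAt Wm Wp m t

/-- Reachability relation. -/
def reach {P T : Type*} (Wm Wp : P → T → ℕ) : (P → ℕ) → (P → ℕ) → Prop :=
  Relation.ReflTransGen (step Wm Wp)

/-- Input bag of a transition. -/
def preBag {P T : Type*} (Wm : P → T → ℕ) (t : T) : P → ℕ := fun p => Wm p t

/-- Output bag of a transition. -/
def postBag {P T : Type*} (Wp : P → T → ℕ) (t : T) : P → ℕ := fun p => Wp p t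

/-- The finite set of complexes of the net. -/
def complexes {P T : Type*} [Fintype P] [Fintype T] [DecidableEq P]
    (Wm Wp : P → T → ℕ) : Finset (P → ℕ) :=
  (Finset.univ.image (preBag Wm)) ∪ (Finset.univ.image (postBag Wp))

/-- `c` is a complex of the net. -/
def isComplex {P T : Type*} (Wm Wp : P → T → ℕ) (c : P → ℕ) : Prop :=
  (∃ t, c = preBag Wm t) ∨ (∃ t, c = postBag Wp t)

/-- Arc of the reaction graph. -/
def rarc {P T : Type*} (Wm Wp : P → T → ℕ) (c c' : P → ℕ) : Prop :=
  ∃ t, c = preBag Wm t ∧ c' = postBag Wp t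

/-- Weak reversibility: every connected component of the reaction graph is
strongly connected. -/
def weaklyReversible {P T : Type*} (Wm Wp : P → T → ℕ) : Prop :=
  ∀ c c', isComplex Wm Wp c → isComplex Wm Wp c' →
    Relation.ReflTransGen (fun a b => rarc Wm Wp a b ∨ rarc Wm Wp b a) c c' →
    Relation.ReflTransGen (rarc Wm Wp) c c'

/-- An `n`-level ordered Π-net.  Levels are indexed by `Fin n`, index `i`
standing for level `i+1` of the informal definition.  Every level is a
strongly connected state machine through which the transitions of that level
route exactly one token; transitions of level `i+1` may in addition consume
and produce tokens of level `i`; every level (except the lowest) is connected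
to the one below it; two transitions of a level sharing their input (resp.
output) place at that level have equal input (resp. output) bags; and the net
is weakly reversible. -/
structure OrderedPiNet (n : ℕ) (P T : Type*) [Fintype P] [Fintype T]
    [DecidableEq P] [DecidableEq T] where
  Wm : P → T → ℕ
  Wp : P → T → ℕ
  lvlP : P → Fin n
  lvlT : T → Fin n
  lvl_surj : Function.Surjective lvlP
  inPlace : T → P
  outPlace : T → P
  inPlace_lvl : ∀ t, lvlP (inPlace t) = lvlT t
  outPlace_lvl : ∀ t, lvlP (outPlace t) = lvlT t
  Wm_in : ∀ t, Wm (inPlace t) t = 1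
  Wp_out : ∀ t, Wp (outPlace t) t = 1
  Wm_own : ∀ t p, lvlP p = lvlT t → p ≠ inPlace t → Wm p t = 0
  Wp_own : ∀ t p, lvlP p = lvlT t → p ≠ outPlace t → Wp p t = 0
  Wm_below : ∀ t p, Wm p t ≠ 0 → lvlP p = lvlT t ∨ (lvlP p : ℕ) + 1 = (lvlT t : ℕ)
  Wp_below : ∀ t p, Wp p t ≠ 0 → lvlP p = lvlT t ∨ (lvlP p : ℕ) + 1 = (lvlT t : ℕ)
  connected_below : ∀ i : Fin n, (i : ℕ) ≠ 0 →
    ∃ t p, lvlT t = i ∧ (lvlP p : ℕ) + 1 = (i : ℕ) ∧ Wm p t ≠ 0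
  sameIn : ∀ t t', inPlace t = inPlace t' → ∀ p, Wm p t = Wm p t'
  sameOut : ∀ t t', outPlace t = outPlace t' → ∀ p, Wp p t = Wp p t'
  strong : ∀ p q, lvlP p = lvlP q →
    Relation.ReflTransGen (fun a b => ∃ t, inPlace t = a ∧ outPlace t = b) p q
  wr : weaklyReversible Wm Wp

namespace OrderedPiNet

variable {n : ℕ} {P T : Type*} [Fintype P] [Fintype T] [DecidableEq P] [DecidableEq T]

/-- The potential `pot(p, q)`: the number of tokens `t•(q)` put in `q` by a
common input transition `t` of `p` and `q`, when `q` is one level below `p`,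
and `0` otherwise. -/
noncomputable def pot (N : OrderedPiNet n P T) (p q : P) : ℕ :=
  if h : ((N.lvlP q : ℕ) + 1 = (N.lvlP p : ℕ)) ∧ ∃ t, N.outPlace t = p ∧ N.Wp q t ≠ 0
  then N.Wp q h.2.choose else 0

/-- The potential of a place: `pot(p) = ∑_{q} pot(p, q)`. -/
noncomputable def potT (N : OrderedPiNet n P T) (p : P) : ℕ := ∑ q, N.pot p q

/-- The marking witness transform `m ↦ m̃`:
`m̃(p) = m(p) − ∑_{r one level above p} m̃(r) · pot(r, p)`. -/
noncomputable def mw (N : OrderedPiNet n P T) (m : P → ℤ) (p : P) : ℤ :=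
  m p - ∑ r : P, (if h : (N.lvlP p : ℕ) + 1 = (N.lvlP r : ℕ)
    then N.mw m r * (N.pot r p : ℤ) else 0)
termination_by n - (N.lvlP p : ℕ)
decreasing_by
  have h1 : (N.lvlP r : ℕ) < n := (N.lvlP r).isLt
  omega

/-- The row `v_i` of S-invariants applied to a vector: `v_i · x = ∑_{p ∈ P_i} x̃(p)`. -/
noncomputable def vRow (N : OrderedPiNet n P T) (i : Fin n) (x : P → ℤ) : ℤ :=
  ∑ p ∈ Finset.univ.filter (fun p => N.lvlP p = i), N.mw x p

/-- Number of tokens of `m` in `P_i`. -/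
def lvlCount (N : OrderedPiNet n P T) (i : Fin n) (m : P → ℕ) : ℕ :=
  ∑ p ∈ Finset.univ.filter (fun p => N.lvlP p = i), m p

/-- Number of tokens of `m` in `P_{i−1}` (the level just below `i`). -/
def belowCount (N : OrderedPiNet n P T) (i : Fin n) (m : P → ℕ) : ℕ :=
  ∑ p ∈ Finset.univ.filter (fun p => (N.lvlP p : ℕ) + 1 = (i : ℕ)), m p

/-- The level-`i` minimal marked potential `φ_i(m)`. -/
noncomputable def phi (N : OrderedPiNet n P T) (i : Fin n) (m : P → ℕ) : ℕ :=
  if N.lvlCount i m = 0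
  then (Finset.univ.filter (fun p => N.lvlP p = i)).sup N.potT
  else sInf (N.potT '' {p | N.lvlP p = i ∧ m p ≠ 0})

/-- The Π³ condition: every interface place has maximal potential on its level. -/
def isPi3 (N : OrderedPiNet n P T) : Prop :=
  ∀ p t, (N.lvlP p : ℕ) + 1 = (N.lvlT t : ℕ) → N.Wp p t ≠ 0 →
    ∀ q, N.lvlP q = N.lvlP p → N.potT q ≤ N.potT p

/-- One step using only transitions of level index at most `i`. -/
def stepUpTo (N : OrderedPiNet n P T) (i : Fin n) (m m' : P → ℕ) : Prop :=
  ∃ t, N.lvlT t ≤ i ∧ enabledAt N.Wm m t ∧ m' = fireAt N.Wm N.Wp m t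

/-- Reachability using only transitions of level index at most `i` (the set `R_i`). -/
def reachUpTo (N : OrderedPiNet n P T) (i : Fin n) : (P → ℕ) → (P → ℕ) → Prop :=
  Relation.ReflTransGen (N.stepUpTo i)

/-- `i`-liveness. -/
def iLive (N : OrderedPiNet n P T) (i : Fin n) (m : P → ℕ) : Prop :=
  ∀ t, N.lvlT t ≤ i → ∃ m', N.reachUpTo i m m' ∧ enabledAt N.Wm m' t

/-- The `i`-condition: `m(P_i) > 0` and `m(P_{j−1}) ≥ φ_j(m)` for all levels
`j` with `2 ≤ j ≤ i` (in 1-based numbering). -/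
def iCond (N : OrderedPiNet n P T) (i : Fin n) (m : P → ℕ) : Prop :=
  N.lvlCount i m ≠ 0 ∧
  ∀ j : Fin n, 1 ≤ (j : ℕ) → j ≤ i → N.phi j m ≤ N.belowCount j m

end OrderedPiNet

/-- The vector `v_i = ∑_{p ∈ P_i} B(p)`, as a rational row vector. -/
noncomputable def vBasis {n : ℕ} {P T : Type*} [Fintype P] [Fintype T]
    [DecidableEq P] [DecidableEq T] (N : OrderedPiNet n P T) (i : Fin n) (q : P) : ℚ :=
  ((∑ p ∈ Finset.univ.filter (fun p => N.lvlP p = i),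
      N.mw (fun r => if r = q then 1 else 0) p : ℤ) : ℚ)


/-!
Let `D = 1 + Π` where `Π r p = pot(r, p)` for `p` one level below `r`. The recursion defining the
marking witness says `D B = 1`, so `B` is invertible with inverse `D`. The column of `D` at the
output (input) place of a transition `t` is the output (input) bag of `t`; the input-bag half of
this needs weak reversibility, which provides a transition whose output bag is the input bag of
`t`. Hence `D A = W`, i.e. `B W = A`, where `A` is the incidence matrix of the reaction graph.
Since every level is a strongly connected state machine, `u A = 0` exactly when `u` is constant
on levels, so `v W = 0` iff `v D` is constant on levels iff `v = ∑ aᵢ vᵢ`; the `aᵢ` are unique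
because `B` is invertible and every level is nonempty.
-/

open Matrix

namespace OrderedPiNet

variable {n : ℕ} {P T : Type*} [Fintype P] [Fintype T] [DecidableEq P] [DecidableEq T]
  (N : OrderedPiNet n P T)

lemma mw_eq (m : P → ℤ) (p : P) :
    N.mw m p = m p - ∑ r : P, (if (N.lvlP p : ℕ) + 1 = (N.lvlP r : ℕ)
      then N.mw m r * (N.pot r p : ℤ) else 0) := by
  rw [OrderedPiNet.mw]
  simp only [dite_eq_ite]

lemma Wp_eq_ite {t : T} {p : P} (h : (N.lvlP p : ℕ) + 1 ≠ (N.lvlT t : ℕ)) :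
    N.Wp p t = if p = N.outPlace t then 1 else 0 := by
  split_ifs with hp
  · exact hp ▸ N.Wp_out t
  · by_contra hz
    rcases N.Wp_below t p hz with hl | hl
    · exact hz (N.Wp_own t p hl hp)
    · exact h hl

lemma Wm_eq_ite {t : T} {p : P} (h : (N.lvlP p : ℕ) + 1 ≠ (N.lvlT t : ℕ)) :
    N.Wm p t = if p = N.inPlace t then 1 else 0 := by
  split_ifs with hp
  · exact hp ▸ N.Wm_in t
  · by_contra hz
    rcases N.Wm_below t p hz with hl | hl
    · exact hz (N.Wm_own t p hl hp)
    · exact h hl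

lemma pot_outPlace {t : T} {p : P} (h : (N.lvlP p : ℕ) + 1 = (N.lvlT t : ℕ)) :
    N.pot (N.outPlace t) p = N.Wp p t := by
  unfold pot
  split_ifs with h'
  · exact N.sameOut _ t h'.2.choose_spec.1 p
  · by_contra hz
    exact h' ⟨by rw [N.outPlace_lvl]; exact h, t, rfl, Ne.symm hz⟩

/-- Otherwise `t` would lie one level above `s` and `s` one level above `t`. -/
lemma inPlace_eq_outPlace_of_bags_eq {t s : T} (h : ∀ p, N.Wm p t = N.Wp p s) :
    N.inPlace t = N.outPlace s := by
  by_contra hne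
  have hs : N.Wp (N.inPlace t) s ≠ 0 := by rw [← h, N.Wm_in]; exact one_ne_zero
  have ht : N.Wm (N.outPlace s) t ≠ 0 := by rw [h, N.Wp_out]; exact one_ne_zero
  have hts : (N.lvlT t : ℕ) + 1 = N.lvlT s := by
    rcases N.Wp_below s _ hs with hl | hl
    · exact absurd (N.Wp_own s _ hl hne) hs
    · rwa [N.inPlace_lvl] at hl
  have hst : (N.lvlT s : ℕ) + 1 = N.lvlT t := by
    rcases N.Wm_below t _ ht with hl | hl
    · exact absurd (N.Wm_own t _ hl (Ne.symm hne)) ht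
    · rwa [N.outPlace_lvl] at hl
  omega

lemma exists_postBag_eq_preBag (t : T) :
    ∃ s, N.outPlace s = N.inPlace t ∧ ∀ p, N.Wp p s = N.Wm p t := by
  have hpath : Relation.ReflTransGen (rarc N.Wm N.Wp) (postBag N.Wp t) (preBag N.Wm t) :=
    N.wr _ _ (Or.inr ⟨t, rfl⟩) (Or.inl ⟨t, rfl⟩)
      (Relation.ReflTransGen.single (Or.inr ⟨t, rfl, rfl⟩))
  obtain ⟨s, hs⟩ : ∃ s, postBag N.Wp s = preBag N.Wm t := by
    rcases hpath.cases_tail with heq | ⟨_, _, s, _, hpost⟩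
    · exact ⟨t, heq.symm⟩
    · exact ⟨s, hpost.symm⟩
  have hbags : ∀ p, N.Wp p s = N.Wm p t := fun p => congrFun hs p
  exact ⟨s, (N.inPlace_eq_outPlace_of_bags_eq fun p => (hbags p).symm).symm, hbags⟩

lemma pot_inPlace {t : T} {p : P} (h : (N.lvlP p : ℕ) + 1 = (N.lvlT t : ℕ)) :
    N.pot (N.inPlace t) p = N.Wm p t := by
  obtain ⟨s, hs, hbags⟩ := N.exists_postBag_eq_preBag t
  have hlvl : (N.lvlP p : ℕ) + 1 = (N.lvlT s : ℕ) := by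
    rwa [← N.outPlace_lvl, hs, N.inPlace_lvl]
  rw [← hs, N.pot_outPlace hlvl, hbags]

lemma eq_of_lvlP_eq {α : Type*} {u : P → α} (hu : ∀ t, u (N.outPlace t) = u (N.inPlace t))
    {p q : P} (h : N.lvlP p = N.lvlP q) : u p = u q := by
  have hpath := N.strong p q h
  clear h
  induction hpath with
  | refl => rfl
  | tail _ harc ih =>
    obtain ⟨t, rfl, rfl⟩ := harc
    rw [ih, hu]

/-- The incidence matrix `W` of the net. -/
def incidence : Matrix P T ℚ :=
  Matrix.of fun q t => (N.Wp q t : ℚ) - N.Wm q t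

/-- The incidence matrix `A` of the reaction graph, each complex `•t`, `t•` being identified
with the level place `inPlace t`, `outPlace t`. -/
def reactionIncidence : Matrix P T ℚ :=
  Matrix.of fun p t => (if p = N.outPlace t then 1 else 0) - if p = N.inPlace t then 1 else 0

/-- The marking-witness matrix `B`. -/
noncomputable def witnessMatrix : Matrix P P ℚ :=
  Matrix.of fun p q => (N.mw (fun r => if r = q then 1 else 0) p : ℚ)

/-- `D = 1 + Π`, the inverse of the marking-witness matrix. -/
noncomputable def potentialMatrix : Matrix P P ℚ :=
  Matrix.of fun p r =>
    (if p = r then 1 else 0) + if (N.lvlP p : ℕ) + 1 = (N.lvlP r : ℕ) then (N.pot r p : ℚ) else 0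

lemma potentialMatrix_outPlace (p : P) (t : T) :
    N.potentialMatrix p (N.outPlace t) = N.Wp p t := by
  simp only [potentialMatrix, of_apply, N.outPlace_lvl]
  by_cases h : (N.lvlP p : ℕ) + 1 = (N.lvlT t : ℕ)
  · have hp : p ≠ N.outPlace t := by rintro rfl; rw [N.outPlace_lvl] at h; omega
    simp [h, hp, N.pot_outPlace h]
  · simp [h, N.Wp_eq_ite h]

lemma potentialMatrix_inPlace (p : P) (t : T) :
    N.potentialMatrix p (N.inPlace t) = N.Wm p t := by
  simp only [potentialMatrix, of_apply, N.inPlace_lvl]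
  by_cases h : (N.lvlP p : ℕ) + 1 = (N.lvlT t : ℕ)
  · have hp : p ≠ N.inPlace t := by rintro rfl; rw [N.inPlace_lvl] at h; omega
    simp [h, hp, N.pot_inPlace h]
  · simp [h, N.Wm_eq_ite h]

lemma potentialMatrix_mul_reactionIncidence :
    N.potentialMatrix * N.reactionIncidence = N.incidence := by
  ext p t
  simp only [mul_apply, reactionIncidence, incidence, of_apply, mul_sub, mul_ite, mul_one,
    mul_zero, Finset.sum_sub_distrib, Finset.sum_ite_eq', Finset.mem_univ, if_true,
    potentialMatrix_outPlace, potentialMatrix_inPlace]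

lemma potentialMatrix_mul_witnessMatrix : N.potentialMatrix * N.witnessMatrix = 1 := by
  ext p q
  have hrec := congrArg (fun z : ℤ => (z : ℚ)) (N.mw_eq (fun r => if r = q then 1 else 0) p)
  push_cast at hrec
  simp only [mul_apply, potentialMatrix, witnessMatrix, of_apply, add_mul, ite_mul, one_mul,
    zero_mul, Finset.sum_add_distrib, Finset.sum_ite_eq, Finset.mem_univ, if_true, one_apply]
  rw [hrec]
  simp only [mul_comm, sub_add_cancel]

lemma witnessMatrix_mul_potentialMatrix : N.witnessMatrix * N.potentialMatrix = 1 :=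
  mul_eq_one_comm.mp N.potentialMatrix_mul_witnessMatrix

lemma witnessMatrix_mul_incidence : N.witnessMatrix * N.incidence = N.reactionIncidence := by
  rw [← potentialMatrix_mul_reactionIncidence, ← Matrix.mul_assoc,
    witnessMatrix_mul_potentialMatrix, Matrix.one_mul]

lemma vecMul_witnessMatrix_injective : Function.Injective (· ᵥ* N.witnessMatrix) := by
  intro x y h
  have := congrArg (· ᵥ* N.potentialMatrix) h
  simpa only [vecMul_vecMul, witnessMatrix_mul_potentialMatrix, vecMul_one] using this

lemma vecMul_reactionIncidence_apply (u : P → ℚ) (t : T) :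
    (u ᵥ* N.reactionIncidence) t = u (N.outPlace t) - u (N.inPlace t) := by
  simp [vecMul, dotProduct, reactionIncidence, mul_sub, Finset.sum_sub_distrib]

lemma vecMul_reactionIncidence_eq_zero_iff (u : P → ℚ) :
    u ᵥ* N.reactionIncidence = 0 ↔ ∃ a : Fin n → ℚ, u = fun p => a (N.lvlP p) := by
  simp only [funext_iff, vecMul_reactionIncidence_apply, Pi.zero_apply, sub_eq_zero]
  constructor
  · intro hu
    exact ⟨fun i => u (Function.surjInv N.lvl_surj i), fun p =>
      N.eq_of_lvlP_eq hu (Function.surjInv_eq N.lvl_surj _).symm⟩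
  · rintro ⟨a, ha⟩ t
    rw [ha, ha, N.outPlace_lvl, N.inPlace_lvl]

lemma vecMul_incidence_eq_zero_iff (v : P → ℚ) :
    v ᵥ* N.incidence = 0 ↔ ∃ a : Fin n → ℚ, v = (fun p => a (N.lvlP p)) ᵥ* N.witnessMatrix := by
  have hv : v = (v ᵥ* N.potentialMatrix) ᵥ* N.witnessMatrix := by
    rw [vecMul_vecMul, potentialMatrix_mul_witnessMatrix, vecMul_one]
  have hW : v ᵥ* N.incidence = (v ᵥ* N.potentialMatrix) ᵥ* N.reactionIncidence := by
    rw [← witnessMatrix_mul_incidence, ← vecMul_vecMul, ← hv]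
  rw [hW, vecMul_reactionIncidence_eq_zero_iff]
  refine exists_congr fun a => ⟨fun ha => ?_, fun ha => ?_⟩
  · rw [hv, ha]
  · exact N.vecMul_witnessMatrix_injective (hv.symm.trans ha)

lemma vBasis_eq_vecMul (i : Fin n) :
    vBasis N i = (fun p => if N.lvlP p = i then 1 else 0) ᵥ* N.witnessMatrix := by
  ext q
  simp [vBasis, vecMul, dotProduct, witnessMatrix, Finset.sum_filter]

lemma vBasis_vecMul_incidence (i : Fin n) : vBasis N i ᵥ* N.incidence = 0 := by
  rw [vBasis_eq_vecMul, vecMul_vecMul, witnessMatrix_mul_incidence,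
    vecMul_reactionIncidence_eq_zero_iff]
  exact ⟨fun j => if j = i then 1 else 0, rfl⟩

lemma sum_mul_vBasis (a : Fin n → ℚ) :
    (fun q => ∑ i, a i * vBasis N i q) = (fun p => a (N.lvlP p)) ᵥ* N.witnessMatrix := by
  ext q
  simp only [vBasis_eq_vecMul, vecMul, dotProduct, Finset.mul_sum, ite_mul, one_mul, zero_mul,
    mul_ite, mul_zero]
  rw [Finset.sum_comm]
  simp

end OrderedPiNet

/-- The vectors `v_1, …, v_n` form a basis of the left kernel of the incidence
matrix: each is an S-semi-flow, and every S-semi-flow is a unique rational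
linear combination of them. -/
theorem stmt15 {n : ℕ} {P T : Type*} [Fintype P] [Fintype T] [DecidableEq P]
    [DecidableEq T] (N : OrderedPiNet n P T) :
    (∀ (i : Fin n) (t : T),
      ∑ q, vBasis N i q * ((N.Wp q t : ℚ) - (N.Wm q t : ℚ)) = 0) ∧
    (∀ v : P → ℚ, (∀ t, ∑ q, v q * ((N.Wp q t : ℚ) - (N.Wm q t : ℚ)) = 0) →
      ∃! a : Fin n → ℚ, v = fun q => ∑ i, a i * vBasis N i q) := by
  refine ⟨fun i t => congrFun (N.vBasis_vecMul_incidence i) t, fun v hv => ?_⟩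
  obtain ⟨a, rfl⟩ := (N.vecMul_incidence_eq_zero_iff v).1 (funext hv)
  refine ⟨a, (N.sum_mul_vBasis a).symm, fun b hb => ?_⟩
  have hab := N.vecMul_witnessMatrix_injective (Eq.trans hb (N.sum_mul_vBasis b))
  exact (N.lvl_surj.injective_comp_right hab).symm
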